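/- arXiv:2602.19717 — 9 statements merged into one kernel-verified Lean document; each statement's English description precedes it below -/
import Mathlib

section
/- There exist polynomials Q_{ij} ∈ ℂ[X] for 1 ≤ i,j ≤ n, each divisible by X^{D_1−1} and of degree at most 2k_0 + 1, such that for every ζ ∈ ℂ with |ζ| = 1 and all 1 ≤ i,j ≤ n one has ζ^{k_0} · Σ_{ℓ=1}^{d} c_ℓ · P_{ℓ,z_i w_j}((1−ζ)V, (1−conj ζ)·conj V) = (1 − conj ζ)^{D_1−2} · Q_{ij}(ζ). -/
open ComplexConjugate

noncomputable section

/-!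
On the unit circle `1 - conj ζ = -conj ζ * (1 - ζ)`. A monomial `z^I w^J` of `P_ℓ` with
`|I| = A`, `|J| = B` contributes to `∂²P_ℓ/∂z_i∂w_j` at `((1 - ζ) V, (1 - conj ζ) conj V)`
a constant times `(1 - ζ)^(A-1) (1 - conj ζ)^(B-1)`. Multiplying by `ζ^k₀` and trading factors
`1 - ζ` for `1 - conj ζ` (at the cost of powers of `-ζ`, which `ζ^k₀` absorbs since `B ≤ k₀`)
extracts `(1 - conj ζ)^(D₁-2)` and leaves `± ζ^(k₀-B+D₁-1) (1 - ζ)^(D_ℓ-D₁)`, a polynomial in `ζ`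
divisible by `ζ^(D₁-1)` and of degree `k₀ + A - 1 ≤ 2k₀ + 1`.
-/

section CircleCofactor

open Polynomial

def circleCofactor (R : Type*) [CommRing R] (k0 m a b : ℕ) : R[X] :=
  C ((-1) ^ (b + m)) * X ^ (k0 - b + m) * (1 - X) ^ (a + b - m)

variable {R : Type*} [CommRing R]

theorem one_sub_pow_mul_eval_circleCofactor {z w : R} (hwz : w * z = 1) {k0 m a b : ℕ}
    (hb : b ≤ k0) (hm : m ≤ a + b) :
    (1 - w) ^ m * (circleCofactor R k0 m a b).eval z = z ^ k0 * ((1 - z) ^ a * (1 - w) ^ b) := by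
  have key (t : ℕ) : z ^ t * (1 - w) ^ t = (-1) ^ t * (1 - z) ^ t := by
    rw [← neg_pow, ← mul_pow]
    congr 1
    linear_combination (-1 : R) * hwz
  obtain ⟨s, rfl⟩ := Nat.exists_eq_add_of_le hb
  obtain ⟨r, hr⟩ := Nat.exists_eq_add_of_le hm
  have hsign : ((-1 : R) ^ m) ^ 2 = 1 := by rw [← pow_mul, mul_comm, pow_mul]; norm_num
  simp only [circleCofactor, eval_mul, eval_C, eval_pow, eval_X, eval_sub, eval_one]
  rw [hr, Nat.add_sub_cancel_left, Nat.add_sub_cancel_left]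
  calc (1 - w) ^ m * ((-1) ^ (b + m) * z ^ (s + m) * (1 - z) ^ r)
      = (-1) ^ b * z ^ s * (1 - z) ^ r * (-1) ^ m * (z ^ m * (1 - w) ^ m) := by ring
    _ = (-1) ^ b * z ^ s * (1 - z) ^ (a + b) := by
          rw [key, hr]
          linear_combination (-1) ^ b * z ^ s * (1 - z) ^ r * (1 - z) ^ m * hsign
    _ = z ^ (b + s) * ((1 - z) ^ a * (1 - w) ^ b) := by
          rw [pow_add, pow_add]
          linear_combination -(z ^ s * (1 - z) ^ a) * key b

theorem X_pow_dvd_circleCofactor {k0 m a b j : ℕ} (hj : j ≤ k0 - b + m) :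
    X ^ j ∣ circleCofactor R k0 m a b :=
  ((pow_dvd_pow X hj).mul_left _).mul_right _

theorem natDegree_circleCofactor_le {k0 m a b : ℕ} (hb : b ≤ k0) (hm : m ≤ a + b) :
    (circleCofactor R k0 m a b).natDegree ≤ k0 + a := by
  have h1X : ((1 : R[X]) - X).natDegree ≤ 1 :=
    (natDegree_sub_le _ _).trans (by simpa using natDegree_X_le)
  calc (circleCofactor R k0 m a b).natDegree
      ≤ 0 + (k0 - b + m) + (a + b - m) * 1 := by
        refine natDegree_mul_le_of_le (natDegree_mul_le_of_le (natDegree_C _).le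
          (natDegree_X_pow_le _)) (natDegree_pow_le_of_le _ h1X)
    _ = k0 + a := by omega

end CircleCofactor

section ScaledEvaluation

open MvPolynomial

variable {R σ τ : Type*} [CommRing R] [Fintype σ] [Fintype τ]
  (x : σ → R) (y : τ → R) (t s : R)

theorem eval_sumElim_mul_monomial (ν : σ ⊕ τ →₀ ℕ) (r : R) :
    eval (Sum.elim (fun p => t * x p) (fun q => s * y q)) (monomial ν r)
      = t ^ (∑ p, ν (Sum.inl p)) * s ^ (∑ q, ν (Sum.inr q)) *
          eval (Sum.elim x y) (monomial ν r) := by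
  simp only [eval_monomial, Finsupp.prod_pow, Fintype.prod_sum_type, Sum.elim_inl,
    Sum.elim_inr, mul_pow, Finset.prod_mul_distrib, Finset.prod_pow_eq_pow_sum]
  ring

theorem Finset.sum_tsub_ite_eq_of_ne_zero {ι : Type*} [Fintype ι] [DecidableEq ι] {f : ι → ℕ}
    {i : ι} (hi : f i ≠ 0) : ∑ p, (f p - if i = p then 1 else 0) = ∑ p, f p - 1 := by
  rw [Finset.sum_tsub_distrib _ fun p _ => ?_]
  · simp
  · split_ifs with h
    · exact Nat.one_le_iff_ne_zero.mpr (h ▸ hi)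
    · exact Nat.zero_le _

/-- The exponents are truncated at `0`; this is harmless, since both sides vanish when
`μ (Sum.inl i) = 0` or `μ (Sum.inr j) = 0`. -/
theorem eval_sumElim_mul_pderiv_pderiv_monomial (i : σ) (j : τ) (μ : σ ⊕ τ →₀ ℕ) (r : R) :
    eval (Sum.elim (fun p => t * x p) (fun q => s * y q))
        (pderiv (Sum.inl i) (pderiv (Sum.inr j) (monomial μ r)))
      = t ^ (∑ p, μ (Sum.inl p) - 1) * s ^ (∑ q, μ (Sum.inr q) - 1) *
          eval (Sum.elim x y) (pderiv (Sum.inl i) (pderiv (Sum.inr j) (monomial μ r))) := by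
  classical
  rw [pderiv_monomial, pderiv_monomial, eval_sumElim_mul_monomial]
  by_cases hi : μ (Sum.inl i) = 0
  · simp [hi]
  by_cases hj : μ (Sum.inr j) = 0
  · simp [hj]
  congr 3 <;>
    simp only [Finsupp.tsub_apply, Finsupp.single_apply, Sum.inl.injEq, Sum.inr.injEq,
      reduceCtorEq, if_false, tsub_zero]
  exacts [Finset.sum_tsub_ite_eq_of_ne_zero (f := fun p => μ (Sum.inl p)) hi,
    Finset.sum_tsub_ite_eq_of_ne_zero (f := fun q => μ (Sum.inr q)) hj]

theorem eval_sumElim_mul_pderiv_pderiv (i : σ) (j : τ)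
    (F : MvPolynomial (σ ⊕ τ) R) :
    eval (Sum.elim (fun p => t * x p) (fun q => s * y q))
        (pderiv (Sum.inl i) (pderiv (Sum.inr j) F))
      = ∑ μ ∈ F.support, t ^ (∑ p, μ (Sum.inl p) - 1) * s ^ (∑ q, μ (Sum.inr q) - 1) *
          eval (Sum.elim x y)
            (pderiv (Sum.inl i) (pderiv (Sum.inr j) (monomial μ (coeff μ F)))) := by
  conv_lhs => rw [← F.support_sum_monomial_coeff]
  simp only [map_sum, eval_sumElim_mul_pderiv_pderiv_monomial]

end ScaledEvaluation

theorem stmt0_general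
    (n d : ℕ) (hd : 1 ≤ d)
    (D k : Fin d → ℕ) (k0 : ℕ)
    (hD1le : ∀ ℓ, D ⟨0, hd⟩ ≤ D ℓ)
    (hk0 : ∀ ℓ, k ℓ ≤ k0)
    (P : Fin d → MvPolynomial (Fin n ⊕ Fin n) ℂ)
    (hsupp : ∀ ℓ, ∀ μ ∈ (P ℓ).support,
      ((∑ i, μ (Sum.inl i)) + (∑ i, μ (Sum.inr i)) = D ℓ ∧
        D ℓ - k ℓ ≤ ∑ i, μ (Sum.inl i)) ∧ (∑ i, μ (Sum.inl i)) ≤ k ℓ)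
    (c : Fin d → ℝ) (V : Fin n → ℂ) :
    ∃ Q : Fin n → Fin n → Polynomial ℂ,
      (∀ i j, (Polynomial.X : Polynomial ℂ) ^ (D ⟨0, hd⟩ - 1) ∣ Q i j ∧
        (Q i j).natDegree ≤ 2 * k0 + 1) ∧
      ∀ ζ : ℂ, ‖ζ‖ = 1 → ∀ i j,
        ζ ^ k0 * ∑ ℓ, (c ℓ : ℂ) *
          MvPolynomial.eval
            (Sum.elim (fun p => (1 - ζ) * V p)
              (fun p => (1 - conj ζ) * conj (V p)))
            (MvPolynomial.pderiv (Sum.inl i) (MvPolynomial.pderiv (Sum.inr j) (P ℓ)))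
        = (1 - conj ζ) ^ (D ⟨0, hd⟩ - 2) * (Q i j).eval ζ := by
  have hbounds : ∀ ℓ, ∀ μ ∈ (P ℓ).support,
      ∑ q, μ (Sum.inr q) - 1 ≤ k0 ∧
        D ⟨0, hd⟩ - 2 ≤ ∑ p, μ (Sum.inl p) - 1 + (∑ q, μ (Sum.inr q) - 1) ∧
        D ⟨0, hd⟩ - 1 ≤ k0 - (∑ q, μ (Sum.inr q) - 1) + (D ⟨0, hd⟩ - 2) ∧
        k0 + (∑ p, μ (Sum.inl p) - 1) ≤ 2 * k0 + 1 := by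
    intro ℓ μ hμ
    have := hsupp ℓ μ hμ
    have := hD1le ℓ
    have := hk0 ℓ
    omega
  refine ⟨fun i j => ∑ ℓ, ∑ μ ∈ (P ℓ).support,
      Polynomial.C ((c ℓ : ℂ) * MvPolynomial.eval (Sum.elim V fun q => conj (V q))
          (MvPolynomial.pderiv (Sum.inl i) (MvPolynomial.pderiv (Sum.inr j)
            (MvPolynomial.monomial μ (MvPolynomial.coeff μ (P ℓ)))))) *
        circleCofactor ℂ k0 (D ⟨0, hd⟩ - 2) (∑ p, μ (Sum.inl p) - 1) (∑ q, μ (Sum.inr q) - 1),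
    fun i j => ⟨?_, ?_⟩, fun ζ hζ i j => ?_⟩
  · exact Finset.dvd_sum fun ℓ _ => Finset.dvd_sum fun μ hμ =>
      (X_pow_dvd_circleCofactor (hbounds ℓ μ hμ).2.2.1).mul_left _
  · refine Polynomial.natDegree_sum_le_of_forall_le _ _ fun ℓ _ =>
      Polynomial.natDegree_sum_le_of_forall_le _ _ fun μ hμ => ?_
    obtain ⟨hb, hm, -, hdeg⟩ := hbounds ℓ μ hμ
    exact (Polynomial.natDegree_C_mul_le _ _).trans
      ((natDegree_circleCofactor_le hb hm).trans hdeg)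
  · have hconj : conj ζ * ζ = 1 := by
      rw [Complex.conj_mul', hζ]; norm_num
    simp only [eval_sumElim_mul_pderiv_pderiv, Polynomial.eval_finsetSum, Polynomial.eval_mul,
      Polynomial.eval_C, Finset.mul_sum]
    refine Finset.sum_congr rfl fun ℓ _ => Finset.sum_congr rfl fun μ hμ => ?_
    obtain ⟨hb, hm, -⟩ := hbounds ℓ μ hμ
    generalize MvPolynomial.eval (Sum.elim V fun q => conj (V q)) _ = κ
    linear_combination -(c ℓ : ℂ) * κ * one_sub_pow_mul_eval_circleCofactor hconj hb hm

theorem stmt0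
    (n d : ℕ) (hn : 1 ≤ n) (hd : 1 ≤ d)
    (D k : Fin d → ℕ) (k0 : ℕ)
    (hD1 : 2 ≤ D ⟨0, hd⟩) (hD1le : ∀ ℓ, D ⟨0, hd⟩ ≤ D ℓ)
    (hklow : ∀ ℓ, D ℓ ≤ 2 * k ℓ) (hkhigh : ∀ ℓ, k ℓ ≤ D ℓ - 1)
    (hk0 : ∀ ℓ, k ℓ ≤ k0) (hk0mem : ∃ ℓ, k ℓ = k0)
    (P : Fin d → MvPolynomial (Fin n ⊕ Fin n) ℂ)
    (hsupp : ∀ ℓ, ∀ μ ∈ (P ℓ).support,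
      ((∑ i, μ (Sum.inl i)) + (∑ i, μ (Sum.inr i)) = D ℓ ∧
        D ℓ - k ℓ ≤ ∑ i, μ (Sum.inl i)) ∧ (∑ i, μ (Sum.inl i)) ≤ k ℓ)
    (hreal : ∀ ℓ μ, MvPolynomial.coeff μ (P ℓ) =
      conj (MvPolynomial.coeff
        (Finsupp.equivMapDomain (Equiv.sumComm (Fin n) (Fin n)) μ) (P ℓ)))
    (c : Fin d → ℝ) (V : Fin n → ℂ) (hV : V ≠ 0) :
    ∃ Q : Fin n → Fin n → Polynomial ℂ,
      (∀ i j, (Polynomial.X : Polynomial ℂ) ^ (D ⟨0, hd⟩ - 1) ∣ Q i j ∧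
        (Q i j).natDegree ≤ 2 * k0 + 1) ∧
      ∀ ζ : ℂ, ‖ζ‖ = 1 → ∀ i j,
        ζ ^ k0 * ∑ ℓ, (c ℓ : ℂ) *
          MvPolynomial.eval
            (Sum.elim (fun p => (1 - ζ) * V p)
              (fun p => (1 - conj ζ) * conj (V p)))
            (MvPolynomial.pderiv (Sum.inl i) (MvPolynomial.pderiv (Sum.inr j) (P ℓ)))
        = (1 - conj ζ) ^ (D ⟨0, hd⟩ - 2) * (Q i j).eval ζ :=
  stmt0_general n d hd D k k0 hD1le hk0 P hsupp c V
end
end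

section
/- There exist polynomials S_{ij} ∈ ℂ[X] for 1 ≤ i,j ≤ n such that for every ζ ∈ ℂ with |ζ| = 1 and all 1 ≤ i,j ≤ n one has (conj ζ)^{k_0} · Σ_{ℓ=1}^{d} c_ℓ · P_{ℓ,w_i w_j}((1−ζ)V, (1−conj ζ)·conj V) = (1 − conj ζ)^{D_1−2} · S_{ij}(conj ζ); that is, the left-hand side is an antiholomorphic polynomial in ζ divided by the stated factor. -/
/-!
Every monomial `z^μ w^ν` of `∂²P_ℓ/∂w_i∂w_j` has `|μ| ≤ k_ℓ ≤ k_0` and `|μ| + |ν| = D_ℓ - 2 ≥ D_1 - 2`.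
On the curve `((1 - ζ) V, (1 - ζ̄) V̄)` it contributes a constant times `(1 - ζ)^|μ| (1 - ζ̄)^|ν|`, and
since `1 - ζ = -ζ (1 - ζ̄)` when `ζ ζ̄ = 1`, the factor `ζ̄^k₀` turns this into
`(-1)^|μ| ζ̄^(k₀ - |μ|) (1 - ζ̄)^(|μ| + |ν|)`.
-/

open ComplexConjugate MvPolynomial

theorem MvPolynomial.add_single_mem_support_of_mem_support_pderiv {R σ : Type*} [CommSemiring R]
    {p : MvPolynomial σ R} {x : σ} {μ : σ →₀ ℕ} (h : μ ∈ (pderiv x p).support) :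
    μ + Finsupp.single x 1 ∈ p.support := by
  rw [mem_support_iff, coeff_pderiv] at h
  exact mem_support_iff.mpr (left_ne_zero_of_mul h)

theorem sum_inl_add_single_inr {σ τ : Type*} [Fintype σ] (μ : (σ ⊕ τ) →₀ ℕ) (i : τ) :
    ∑ p, (μ + Finsupp.single (Sum.inr i) 1 : (σ ⊕ τ) →₀ ℕ) (Sum.inl p) = ∑ p, μ (Sum.inl p) := by
  simp

theorem sum_inr_add_single_inr {σ τ : Type*} [Fintype τ] (μ : (σ ⊕ τ) →₀ ℕ) (i : τ) :
    ∑ p, (μ + Finsupp.single (Sum.inr i) 1 : (σ ⊕ τ) →₀ ℕ) (Sum.inr p) = ∑ p, μ (Sum.inr p) + 1 := by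
  simp [Finset.sum_add_distrib, Finsupp.single_apply_left Sum.inr_injective]

theorem pow_mul_one_sub_pow_mul_one_sub_pow {R : Type*} [CommRing R] {u v : R} (huv : u * v = 1)
    {a b k0 m : ℕ} (ha : a ≤ k0) (hm : m ≤ a + b) :
    v ^ k0 * ((1 - u) ^ a * (1 - v) ^ b) =
      (1 - v) ^ m * ((-1) ^ a * v ^ (k0 - a) * (1 - v) ^ (a + b - m)) := by
  have hu : 1 - u = -1 * (u * (1 - v)) := by linear_combination -huv
  have huv_pow : u ^ a * v ^ a = 1 := by rw [← mul_pow, huv, one_pow]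
  have hv_pow : v ^ k0 = v ^ (k0 - a) * v ^ a := by rw [← pow_add, Nat.sub_add_cancel ha]
  have hsplit : (1 - v) ^ (a + b) = (1 - v) ^ m * (1 - v) ^ (a + b - m) := by
    rw [← pow_add, Nat.add_sub_cancel' hm]
  calc v ^ k0 * ((1 - u) ^ a * (1 - v) ^ b)
      = (-1) ^ a * v ^ (k0 - a) * (u ^ a * v ^ a) * (1 - v) ^ (a + b) := by
        rw [hu, hv_pow, mul_pow, mul_pow, pow_add]; ring
    _ = (1 - v) ^ m * ((-1) ^ a * v ^ (k0 - a) * (1 - v) ^ (a + b - m)) := by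
        rw [huv_pow, hsplit]; ring

theorem prod_sumElim_mul_pow {R σ τ : Type*} [CommSemiring R] [Fintype σ] [Fintype τ]
    (s t : R) (V : σ → R) (W : τ → R) (μ : (σ ⊕ τ) →₀ ℕ) :
    ∏ x, Sum.elim (fun p => s * V p) (fun p => t * W p) x ^ μ x =
      s ^ (∑ p, μ (Sum.inl p)) * t ^ (∑ p, μ (Sum.inr p)) *
        ((∏ p, V p ^ μ (Sum.inl p)) * ∏ p, W p ^ μ (Sum.inr p)) := by
  simp only [Fintype.prod_sum_type, Sum.elim_inl, Sum.elim_inr, mul_pow,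
    Finset.prod_mul_distrib, Finset.prod_pow_eq_pow_sum]
  ring

theorem exists_pow_mul_eval_eq_one_sub_pow_mul_eval {R σ τ : Type*} [CommRing R]
    [Fintype σ] [Fintype τ] (Q : MvPolynomial (σ ⊕ τ) R) (V : σ → R) (W : τ → R) {k0 m : ℕ}
    (hQ : ∀ μ ∈ Q.support,
      ∑ p, μ (Sum.inl p) ≤ k0 ∧ m ≤ ∑ p, μ (Sum.inl p) + ∑ p, μ (Sum.inr p)) :
    ∃ S : Polynomial R, ∀ u v : R, u * v = 1 →
      v ^ k0 * eval (Sum.elim (fun p => (1 - u) * V p) (fun p => (1 - v) * W p)) Q =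
        (1 - v) ^ m * S.eval v := by
  classical
  refine ⟨∑ μ ∈ Q.support,
    Polynomial.C (coeff μ Q * ((∏ p, V p ^ μ (Sum.inl p)) * ∏ p, W p ^ μ (Sum.inr p)) *
      (-1) ^ (∑ p, μ (Sum.inl p))) *
    Polynomial.X ^ (k0 - ∑ p, μ (Sum.inl p)) *
    (1 - Polynomial.X) ^ (∑ p, μ (Sum.inl p) + ∑ p, μ (Sum.inr p) - m), fun u v huv => ?_⟩
  rw [eval_eq', Polynomial.eval_finsetSum, Finset.mul_sum, Finset.mul_sum]
  refine Finset.sum_congr rfl fun μ hμ => ?_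
  obtain ⟨ha, hm⟩ := hQ μ hμ
  simp only [prod_sumElim_mul_pow, Polynomial.eval_mul, Polynomial.eval_pow,
    Polynomial.eval_C, Polynomial.eval_X, Polynomial.eval_sub, Polynomial.eval_one]
  linear_combination (coeff μ Q * ((∏ p, V p ^ μ (Sum.inl p)) * ∏ p, W p ^ μ (Sum.inr p))) *
    pow_mul_one_sub_pow_mul_one_sub_pow huv ha hm

theorem stmt1_general
    (n d : ℕ) (hd : 1 ≤ d)
    (D k : Fin d → ℕ) (k0 : ℕ)
    (hD1le : ∀ ℓ, D ⟨0, hd⟩ ≤ D ℓ)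
    (hk0 : ∀ ℓ, k ℓ ≤ k0)
    (P : Fin d → MvPolynomial (Fin n ⊕ Fin n) ℂ)
    (hsupp : ∀ ℓ, ∀ μ ∈ (P ℓ).support,
      ((∑ i, μ (Sum.inl i)) + (∑ i, μ (Sum.inr i)) = D ℓ ∧
        D ℓ - k ℓ ≤ ∑ i, μ (Sum.inl i)) ∧ (∑ i, μ (Sum.inl i)) ≤ k ℓ)
    (c : Fin d → ℝ) (V : Fin n → ℂ) :
    ∃ S : Fin n → Fin n → Polynomial ℂ,
      ∀ ζ : ℂ, ‖ζ‖ = 1 → ∀ i j,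
        (conj ζ) ^ k0 * ∑ ℓ, (c ℓ : ℂ) *
          MvPolynomial.eval
            (Sum.elim (fun p => (1 - ζ) * V p)
              (fun p => (1 - conj ζ) * conj (V p)))
            (MvPolynomial.pderiv (Sum.inr i) (MvPolynomial.pderiv (Sum.inr j) (P ℓ)))
        = (1 - conj ζ) ^ (D ⟨0, hd⟩ - 2) * (S i j).eval (conj ζ) := by
  have hbidegree : ∀ ℓ i j, ∀ μ ∈ (pderiv (Sum.inr i) (pderiv (Sum.inr j) (P ℓ))).support,
      ∑ p, μ (Sum.inl p) ≤ k0 ∧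
        D ⟨0, hd⟩ - 2 ≤ ∑ p, μ (Sum.inl p) + ∑ p, μ (Sum.inr p) := by
    intro ℓ i j μ hμ
    have hμP := add_single_mem_support_of_mem_support_pderiv
      (add_single_mem_support_of_mem_support_pderiv hμ)
    obtain ⟨⟨hdeg, -⟩, hle⟩ := hsupp ℓ _ hμP
    simp only [sum_inl_add_single_inr, sum_inr_add_single_inr] at hdeg hle
    exact ⟨hle.trans (hk0 ℓ), by have := hD1le ℓ; omega⟩
  choose S hS using fun ℓ i j =>
    exists_pow_mul_eval_eq_one_sub_pow_mul_eval _ V (fun p => conj (V p)) (hbidegree ℓ i j)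
  refine ⟨fun i j => ∑ ℓ, Polynomial.C (c ℓ : ℂ) * S ℓ i j, fun ζ hζ i j => ?_⟩
  have hζζ : ζ * conj ζ = 1 := by rw [Complex.mul_conj', hζ]; norm_num
  rw [Polynomial.eval_finsetSum, Finset.mul_sum, Finset.mul_sum]
  refine Finset.sum_congr rfl fun ℓ _ => ?_
  rw [Polynomial.eval_mul, Polynomial.eval_C, mul_left_comm, hS ℓ i j ζ (conj ζ) hζζ,
    mul_left_comm]

theorem stmt1
    (n d : ℕ) (hn : 1 ≤ n) (hd : 1 ≤ d)
    (D k : Fin d → ℕ) (k0 : ℕ)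
    (hD1 : 2 ≤ D ⟨0, hd⟩) (hD1le : ∀ ℓ, D ⟨0, hd⟩ ≤ D ℓ)
    (hklow : ∀ ℓ, D ℓ ≤ 2 * k ℓ) (hkhigh : ∀ ℓ, k ℓ ≤ D ℓ - 1)
    (hk0 : ∀ ℓ, k ℓ ≤ k0) (hk0mem : ∃ ℓ, k ℓ = k0)
    (P : Fin d → MvPolynomial (Fin n ⊕ Fin n) ℂ)
    (hsupp : ∀ ℓ, ∀ μ ∈ (P ℓ).support,
      ((∑ i, μ (Sum.inl i)) + (∑ i, μ (Sum.inr i)) = D ℓ ∧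
        D ℓ - k ℓ ≤ ∑ i, μ (Sum.inl i)) ∧ (∑ i, μ (Sum.inl i)) ≤ k ℓ)
    (hreal : ∀ ℓ μ, MvPolynomial.coeff μ (P ℓ) =
      conj (MvPolynomial.coeff
        (Finsupp.equivMapDomain (Equiv.sumComm (Fin n) (Fin n)) μ) (P ℓ)))
    (c : Fin d → ℝ) (V : Fin n → ℂ) (hV : V ≠ 0) :
    ∃ S : Fin n → Fin n → Polynomial ℂ,
      ∀ ζ : ℂ, ‖ζ‖ = 1 → ∀ i j,
        (conj ζ) ^ k0 * ∑ ℓ, (c ℓ : ℂ) *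
          MvPolynomial.eval
            (Sum.elim (fun p => (1 - ζ) * V p)
              (fun p => (1 - conj ζ) * conj (V p)))
            (MvPolynomial.pderiv (Sum.inr i) (MvPolynomial.pderiv (Sum.inr j) (P ℓ)))
        = (1 - conj ζ) ^ (D ⟨0, hd⟩ - 2) * (S i j).eval (conj ζ) :=
  stmt1_general n d hd D k k0 hD1le hk0 P hsupp c V
end

section
/- For a quadric model (all D_ℓ = 2, k_ℓ = 1, k_0 = 1, P_ℓ(z,w) = Σ_{p,q} (A_ℓ)_{pq} w_p z_q with A_ℓ Hermitian): (i) a pair (c,V) ∈ ℝ^d × (ℂ^n∖{0}) is admissible if and only if the matrix Σ_{ℓ=1}^{d} c_ℓ A_ℓ is invertible; (ii) consequently, the quadric model is admissible if and only if there exists c ∈ ℝ^d such that Σ_{ℓ=1}^{d} c_ℓ A_ℓ is invertible (i.e., if and only if the quadric is strongly Levi nondegenerate). -/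
open ComplexConjugate

noncomputable section

/-- The quadric model polynomial `P_ℓ(z,w) = Σ_{p,q} (A_ℓ)_{pq} w_p z_q`,
as a polynomial in the `2n` variables `z = X ∘ Sum.inl`, `w = X ∘ Sum.inr`. -/
def quadP (n d : ℕ) (A : Fin d → Matrix (Fin n) (Fin n) ℂ) (ℓ : Fin d) :
    MvPolynomial (Fin n ⊕ Fin n) ℂ :=
  ∑ p, ∑ q, MvPolynomial.C (A ℓ p q) *
    MvPolynomial.X (Sum.inr p) * MvPolynomial.X (Sum.inl q)

/-- The boundary evaluation point `((1-ζ)V, (1-conj ζ)·conj V)`. -/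
def bpt (n : ℕ) (ζ : ℂ) (V : Fin n → ℂ) : Fin n ⊕ Fin n → ℂ :=
  Sum.elim (fun i => (1 - ζ) * V i) (fun i => (1 - conj ζ) * conj (V i))

/-- Admissibility of the pair `(c,V)` for the quadric model (here `D_1 = 2`, `k_0 = 1`). -/
def AdmissiblePairQuad (n d : ℕ) (A : Fin d → Matrix (Fin n) (Fin n) ℂ)
    (c : Fin d → ℝ) (V : Fin n → ℂ) : Prop :=
  ∃ Q : Fin n → Fin n → Polynomial ℂ,
    ∀ ζ : ℂ, ‖ζ‖ = 1 →
      (∀ i j, ζ ^ 1 * ∑ ℓ, (c ℓ : ℂ) *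
          MvPolynomial.eval (bpt n ζ V)
            (MvPolynomial.pderiv (Sum.inl i) (MvPolynomial.pderiv (Sum.inr j)
              (quadP n d A ℓ)))
        = (1 - conj ζ) ^ (2 - 2) * (Q i j).eval ζ) ∧
      IsUnit (Matrix.of fun i j => (Q i j).eval ζ)

lemma deriv_eval (n d : ℕ) (A : Fin d → Matrix (Fin n) (Fin n) ℂ) (ℓ : Fin d) (i j : Fin n)
    (ζ : ℂ) (V : Fin n → ℂ) :
    MvPolynomial.eval (bpt n ζ V)
      (MvPolynomial.pderiv (Sum.inl i) (MvPolynomial.pderiv (Sum.inr j) (quadP n d A ℓ)))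
    = A ℓ j i := by
  simp [quadP, MvPolynomial.pderiv_mul, MvPolynomial.pderiv_X, Pi.single_apply,
    Finset.sum_ite_eq, map_sum]

lemma pair_iff (n d : ℕ) (A : Fin d → Matrix (Fin n) (Fin n) ℂ)
    (c : Fin d → ℝ) (V : Fin n → ℂ) :
    AdmissiblePairQuad n d A c V ↔ IsUnit (∑ ℓ, (c ℓ : ℂ) • A ℓ) := by
  set M : Matrix (Fin n) (Fin n) ℂ := ∑ ℓ, (c ℓ : ℂ) • A ℓ with hM
  have hMapp : ∀ i j, M i j = ∑ ℓ, (c ℓ : ℂ) * A ℓ i j := by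
    intro i j; simp [hM, Finset.sum_apply, Matrix.sum_apply]
  constructor
  · rintro ⟨Q, hQ⟩
    obtain ⟨h1, h2⟩ := hQ 1 (by simp)
    have hQ1 : (Matrix.of fun i j => (Q i j).eval 1) = M.transpose := by
      ext i j
      have := h1 i j
      simp only [deriv_eval, pow_one, one_mul, map_one] at this
      norm_num at this
      simp [Matrix.transpose_apply, hMapp, ← this]
    rw [hQ1] at h2
    rw [Matrix.isUnit_iff_isUnit_det] at h2 ⊢
    rwa [Matrix.det_transpose] at h2
  · intro hU
    refine ⟨fun i j => Polynomial.C (M j i) * Polynomial.X, fun ζ hζ => ?_⟩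
    have hζ0 : ζ ≠ 0 := by intro h; simp [h] at hζ
    constructor
    · intro i j
      simp only [deriv_eval, pow_one, Polynomial.eval_mul, Polynomial.eval_C,
        Polynomial.eval_X]
      rw [hMapp]
      norm_num [Finset.mul_sum]
      rw [Finset.sum_mul]
      exact Finset.sum_congr rfl fun ℓ _ => by ring
    · have : (Matrix.of fun i j => (Polynomial.C (M j i) * Polynomial.X).eval ζ)
          = ζ • M.transpose := by
        ext i j
        simp only [Matrix.of_apply, Polynomial.eval_mul, Polynomial.eval_C,
          Polynomial.eval_X, Matrix.smul_apply, Matrix.transpose_apply, smul_eq_mul]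
        ring
      rw [this, Matrix.isUnit_iff_isUnit_det, Matrix.det_smul, Matrix.det_transpose]
      simpa [Fintype.card_fin] using (IsUnit.pow n (isUnit_iff_ne_zero.mpr hζ0)).mul
        ((Matrix.isUnit_iff_isUnit_det M).mp hU)

theorem stmt3 (n d : ℕ) (hn : 1 ≤ n) (hd : 1 ≤ d)
    (A : Fin d → Matrix (Fin n) (Fin n) ℂ)
    (hA : ∀ ℓ, (A ℓ).IsHermitian) (hA0 : ∃ ℓ, A ℓ ≠ 0) :
    (∀ (c : Fin d → ℝ) (V : Fin n → ℂ), V ≠ 0 →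
      (AdmissiblePairQuad n d A c V ↔ IsUnit (∑ ℓ, (c ℓ : ℂ) • A ℓ))) ∧
    ((∃ (c : Fin d → ℝ) (V : Fin n → ℂ), V ≠ 0 ∧ AdmissiblePairQuad n d A c V) ↔
      (∃ c : Fin d → ℝ, IsUnit (∑ ℓ, (c ℓ : ℂ) • A ℓ))) := by
  refine ⟨fun c V _ => pair_iff n d A c V, ?_, ?_⟩
  · rintro ⟨c, V, _, h⟩
    exact ⟨c, (pair_iff n d A c V).mp h⟩
  · rintro ⟨c, hU⟩
    refine ⟨c, fun _ => 1, ?_, (pair_iff n d A c _).mpr hU⟩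
    intro h
    have := congrFun h ⟨0, hn⟩
    simp at this
end
end

section
/- If 0 < t < 2/3, then the hypersurface model {Re w = |z|⁴ + 2t·Re(z³·conj z)} ⊂ ℂ² is admissible: there exist c ∈ ℝ, V ∈ ℂ∖{0}, and a polynomial Q ∈ ℂ[X] such that for all ζ with |ζ| = 1, ζ³ · c · (4(1−ζ)(1−conj ζ)·V·conj V + 3t(1−ζ)²V² + 3t(1−conj ζ)²(conj V)²) = (1−conj ζ)² · Q(ζ), and Q(ζ) ≠ 0 for every |ζ| = 1. -/
open ComplexConjugate Polynomial

noncomputable section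

/- Take V = 1 and c = 1. On the unit circle conj ζ = ζ⁻¹ and 1 - ζ = -ζ (1 - ζ⁻¹), so
ζ³ P_{zw}(1 - ζ, 1 - ζ⁻¹) = (1 - ζ⁻¹)² ζ³ (3t ζ² - 4ζ + 3t). The quadratic factor has no root on
the unit circle because there ‖3t ζ² + 3t‖ ≤ 6t < 4 = ‖4ζ‖. -/

theorem quadratic_ne_zero_of_norm_eq_one {𝕜 : Type*} [NormedDivisionRing 𝕜] {a b c ζ : 𝕜}
    (hζ : ‖ζ‖ = 1) (habc : ‖a‖ + ‖c‖ < ‖b‖) : a * ζ ^ 2 + b * ζ + c ≠ 0 := by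
  intro h
  have hb : b * ζ = -(a * ζ ^ 2 + c) := by rw [eq_neg_iff_add_eq_zero, ← h]; abel
  have : ‖b‖ ≤ ‖a‖ + ‖c‖ :=
    calc ‖b‖ = ‖b * ζ‖ := by rw [norm_mul, hζ, mul_one]
      _ = ‖a * ζ ^ 2 + c‖ := by rw [hb, norm_neg]
      _ ≤ ‖a * ζ ^ 2‖ + ‖c‖ := norm_add_le _ _
      _ = ‖a‖ + ‖c‖ := by rw [norm_mul, norm_pow, hζ, one_pow, mul_one]
  linarith

theorem pow_three_mul_form_eq_one_sub_inv_sq_mul {K : Type*} [Field K] {ζ : K} (hζ : ζ ≠ 0) (α β : K) :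
    ζ ^ 3 * (α * (1 - ζ) * (1 - ζ⁻¹) + β * (1 - ζ) ^ 2 + β * (1 - ζ⁻¹) ^ 2)
      = (1 - ζ⁻¹) ^ 2 * (ζ ^ 3 * (β * ζ ^ 2 - α * ζ + β)) := by
  field_simp
  ring

theorem stmt4 (t : ℝ) (ht0 : 0 < t) (ht : t < 2 / 3) :
    ∃ (c : ℝ) (V : ℂ), V ≠ 0 ∧ ∃ Q : Polynomial ℂ,
      ∀ ζ : ℂ, ‖ζ‖ = 1 →
        ζ ^ 3 * (c : ℂ) *
            (4 * (1 - ζ) * (1 - conj ζ) * V * conj V +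
              3 * (t : ℂ) * (1 - ζ) ^ 2 * V ^ 2 +
              3 * (t : ℂ) * (1 - conj ζ) ^ 2 * (conj V) ^ 2)
          = (1 - conj ζ) ^ 2 * Q.eval ζ ∧ Q.eval ζ ≠ 0 := by
  refine ⟨1, 1, one_ne_zero, X ^ 3 * (C (3 * (t : ℂ)) * X ^ 2 + C (-4) * X + C (3 * (t : ℂ))),
    fun ζ hζ => ?_⟩
  have hζ0 : ζ ≠ 0 := ne_zero_of_norm_ne_zero (by rw [hζ]; exact one_ne_zero)
  have h3t : ‖(3 * (t : ℂ))‖ = 3 * t := by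
    rw [norm_mul, Complex.norm_real, Real.norm_of_nonneg ht0.le]; norm_num
  have hquad : 3 * (t : ℂ) * ζ ^ 2 + -4 * ζ + 3 * t ≠ 0 :=
    quadratic_ne_zero_of_norm_eq_one hζ (by rw [h3t]; norm_num; linarith)
  simp only [eval_mul, eval_add, eval_pow, eval_C, eval_X]
  refine ⟨?_, mul_ne_zero (pow_ne_zero 3 hζ0) hquad⟩
  rw [← Complex.inv_eq_conj hζ]
  simpa [sub_eq_add_neg] using pow_three_mul_form_eq_one_sub_inv_sq_mul hζ0 4 (3 * (t : ℂ))
end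
end

section
/- If t ≥ 2/3, then the hypersurface model {Re w = |z|⁴ + 2t·Re(z³·conj z)} ⊂ ℂ² is not admissible: for every c ∈ ℝ, every V ∈ ℂ∖{0}, and every polynomial Q ∈ ℂ[X] satisfying ζ³ · c · (4(1−ζ)(1−conj ζ)·V·conj V + 3t(1−ζ)²V² + 3t(1−conj ζ)²(conj V)²) = (1−conj ζ)² · Q(ζ) for all |ζ| = 1, there exists ζ₀ with |ζ₀| = 1 and Q(ζ₀) = 0. -/
/-!
On the unit circle `conj ζ = ζ⁻¹`, so multiplying the defining identity by `ζ²` turns it into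
`(ζ - 1)² Q(ζ) = (ζ - 1)² · c ζ³ (3t V² ζ² - 4|V|² ζ + 3t conj V²)`, an identity between
polynomials on an infinite set. Hence `Q = c X³ (3t V² X² - 4|V|² X + 3t conj V²)`. Substituting
`ζ = (conj V / V) u`, the quadratic factor becomes `conj V² (3t u² - 4u + 3t)`, a real
self-reciprocal quadratic whose discriminant `16 - 36t²` is nonpositive for `t ≥ 2/3`; its roots
are conjugate with product `1`, so they lie on the unit circle, and so does the corresponding `ζ`.
-/

open ComplexConjugate Complex Metric Polynomial Real

lemma Complex.sphere_infinite (c : ℂ) {R : ℝ} (hR : 0 < R) : (sphere c R).Infinite :=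
  ((Set.Ico_infinite (by positivity : (0 : ℝ) < 2 * π)).image
      (injOn_circleMap_of_abs_sub_le' hR.ne' (by linarith))).mono
    (by rintro _ ⟨θ, -, rfl⟩; exact circleMap_mem_sphere c hR.le θ)

lemma Polynomial.eq_of_eval_eq_on_sphere {p q : ℂ[X]} {c : ℂ} {R : ℝ} (hR : 0 < R)
    (h : ∀ z ∈ sphere c R, p.eval z = q.eval z) : p = q :=
  eq_of_infinite_eval_eq p q ((Complex.sphere_infinite c hR).mono h)

lemma Complex.exists_norm_eq_one_sq_sub_mul_add_one_eq_zero {x : ℝ} (hx : |x| ≤ 1) :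
    ∃ u : ℂ, ‖u‖ = 1 ∧ u ^ 2 - 2 * x * u + 1 = 0 := by
  obtain ⟨hx₁, hx₂⟩ := abs_le.mp hx
  refine ⟨exp (arccos x * I), norm_exp_ofReal_mul_I _, ?_⟩
  set u := exp (arccos x * I)
  have hre : 2 * (x : ℂ) = u + conj u := by
    rw [add_conj, exp_ofReal_mul_I_re, Real.cos_arccos hx₁ hx₂]; push_cast; ring
  have hnorm : u * conj u = 1 := by
    rw [mul_conj, normSq_eq_norm_sq, norm_exp_ofReal_mul_I]; norm_num
  linear_combination (-u) * hre - hnorm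

lemma eval_eq_of_forall_norm_eq_one {t c : ℝ} {V : ℂ} {Q : ℂ[X]}
    (hQ : ∀ ζ : ℂ, ‖ζ‖ = 1 →
      ζ ^ 3 * (c : ℂ) *
          (4 * (1 - ζ) * (1 - conj ζ) * V * conj V +
            3 * (t : ℂ) * (1 - ζ) ^ 2 * V ^ 2 +
            3 * (t : ℂ) * (1 - conj ζ) ^ 2 * (conj V) ^ 2)
        = (1 - conj ζ) ^ 2 * Q.eval ζ) (z : ℂ) :
    Q.eval z = c * z ^ 3 * (3 * t * V ^ 2 * z ^ 2 - 4 * V * conj V * z + 3 * t * conj V ^ 2) := by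
  set R : ℂ[X] := C (c : ℂ) * X ^ 3 *
    (C (3 * t * V ^ 2) * X ^ 2 - C (4 * V * conj V) * X + C (3 * t * conj V ^ 2))
  suffices hQR : Q = R by simp [hQR, R]
  refine mul_left_cancel₀ (pow_ne_zero 2 (X_sub_C_ne_zero 1))
    (eq_of_eval_eq_on_sphere (c := 0) one_pos ?_)
  intro ζ hζ
  rw [mem_sphere_zero_iff_norm] at hζ
  have hζ₀ : ζ ≠ 0 := by rintro rfl; simp at hζ
  have hconj : conj ζ = ζ⁻¹ := (inv_eq_conj hζ).symm
  have hQζ := hQ ζ hζ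
  rw [hconj] at hQζ
  field_simp at hQζ
  simp only [eval_mul, eval_pow, eval_sub, eval_X, eval_C, eval_add, R]
  linear_combination -hQζ

theorem stmt5_general (t : ℝ) (ht : 2 / 3 ≤ t) :
    ∀ (c : ℝ) (V : ℂ), V ≠ 0 → ∀ Q : Polynomial ℂ,
      (∀ ζ : ℂ, ‖ζ‖ = 1 →
        ζ ^ 3 * (c : ℂ) *
            (4 * (1 - ζ) * (1 - conj ζ) * V * conj V +
              3 * (t : ℂ) * (1 - ζ) ^ 2 * V ^ 2 +
              3 * (t : ℂ) * (1 - conj ζ) ^ 2 * (conj V) ^ 2)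
          = (1 - conj ζ) ^ 2 * Q.eval ζ) →
      ∃ ζ₀ : ℂ, ‖ζ₀‖ = 1 ∧ Q.eval ζ₀ = 0 := by
  intro c V hV Q hQ
  have ht0 : 0 < t := by linarith
  have hx : |2 / (3 * t)| ≤ 1 := by
    rw [abs_of_pos (by positivity), div_le_one (by positivity)]; linarith
  obtain ⟨u, hu₁, hu⟩ := exists_norm_eq_one_sq_sub_mul_add_one_eq_zero hx
  set ζ₀ := conj V / V * u
  refine ⟨ζ₀, by simp [ζ₀, hu₁, hV], ?_⟩
  have hVζ₀ : V * ζ₀ = conj V * u := by simp only [ζ₀]; field_simp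
  have hquad : 3 * (t : ℂ) * u ^ 2 - 4 * u + 3 * t = 0 := by
    have htC : (t : ℂ) ≠ 0 := ofReal_ne_zero.mpr ht0.ne'
    push_cast at hu
    field_simp at hu
    linear_combination hu
  rw [eval_eq_of_forall_norm_eq_one hQ]
  linear_combination (c * ζ₀ ^ 3) *
    (conj V ^ 2 * hquad + (3 * t * (V * ζ₀ + conj V * u) - 4 * conj V) * hVζ₀)

theorem stmt5 (t : ℝ) (ht0 : 0 < t) (ht : 2 / 3 ≤ t) :
    ∀ (c : ℝ) (V : ℂ), V ≠ 0 → ∀ Q : Polynomial ℂ,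
      (∀ ζ : ℂ, ‖ζ‖ = 1 →
        ζ ^ 3 * (c : ℂ) *
            (4 * (1 - ζ) * (1 - conj ζ) * V * conj V +
              3 * (t : ℂ) * (1 - ζ) ^ 2 * V ^ 2 +
              3 * (t : ℂ) * (1 - conj ζ) ^ 2 * (conj V) ^ 2)
          = (1 - conj ζ) ^ 2 * Q.eval ζ) →
      ∃ ζ₀ : ℂ, ‖ζ₀‖ = 1 ∧ Q.eval ζ₀ = 0 :=
  stmt5_general t ht
end

section
/- Let D_1 ≤ D_2 be even integers with D_1 ≥ 2, and consider the model in ℂ⁴ (n = d = 2) with P_1(z,w) = (z_1w_1)^{D_1/2} + (z_2w_2)^{D_1/2} and P_2(z,w) = (z_1w_1)^{D_2/2} + (z_2w_2)^{D_2/2}, with k_1 = D_1/2, k_2 = D_2/2 and k_0 = D_2/2. Then the pair c = (1,0), V = (1,1) is admissible: the diagonal matrix Q(ζ) with both diagonal entries equal to (D_1/2)²(−1)^{D_1/2−1}·ζ^{k_0+D_1/2−1} and zero off-diagonal entries satisfies ζ^{k_0} Σ_ℓ c_ℓ P_{ℓ,z_i w_j}((1−ζ)V, (1−conj ζ)·conj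 V) = (1−conj ζ)^{D_1−2} Q_{ij}(ζ) for all |ζ| = 1, and Q(ζ) is invertible for every |ζ| = 1; hence the model is admissible. -/
/-!
Let `m = D₁/2`. On the unit circle `1 - ζ = -ζ (1 - conj ζ)`, hence
`((1 - ζ)(1 - conj ζ))^(m-1) = (-1)^(m-1) ζ^(m-1) (1 - conj ζ)^(2m-2)`.
The mixed Hessian `∂²P₁/∂zᵢ∂wⱼ` of `P₁ = (z₁w₁)^m + (z₂w₂)^m` is diagonal with entries
`m² (zᵢwᵢ)^(m-1)`, and `c = (1, 0)` discards `P₂`, so multiplying by `ζ^k₀` gives exactly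
`(1 - conj ζ)^(D₁-2) Q(ζ)`; `Q(ζ)` is invertible since `m ≠ 0` and `ζ ≠ 0`.
-/

open ComplexConjugate

noncomputable section

/-- `P7 m = (z₁w₁)^m + (z₂w₂)^m` as a polynomial in the variables
`z = X ∘ Sum.inl`, `w = X ∘ Sum.inr` (case `n = 2`). -/
def P7 (m : ℕ) : MvPolynomial (Fin 2 ⊕ Fin 2) ℂ :=
  (MvPolynomial.X (Sum.inl 0) * MvPolynomial.X (Sum.inr 0)) ^ m +
    (MvPolynomial.X (Sum.inl 1) * MvPolynomial.X (Sum.inr 1)) ^ m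

/-- The candidate diagonal matrix of polynomials
`Q(ζ) = diag((D₁/2)²(−1)^{D₁/2−1} ζ^{k₀+D₁/2−1})` with `k₀ = m₂`. -/
def Q7 (m1 m2 : ℕ) (i j : Fin 2) : Polynomial ℂ :=
  if i = j then
    Polynomial.C ((m1 : ℂ) ^ 2 * (-1) ^ (m1 - 1)) * Polynomial.X ^ (m2 + m1 - 1)
  else 0

open MvPolynomial

section
variable {σ R : Type*} [CommSemiring R]

theorem pderiv_X_mul_X_pow_of_ne {a b c : σ} (hb : a ≠ b) (hc : a ≠ c) (m : ℕ) :
    pderiv a ((X b * X c : MvPolynomial σ R) ^ m) = 0 := by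
  simp [hb.symm, hc.symm]

theorem pderiv_pderiv_X_mul_X_pow {a b : σ} (hab : a ≠ b) (m : ℕ) :
    pderiv a (pderiv b ((X a * X b : MvPolynomial σ R) ^ m)) =
      C ((m : R) ^ 2) * (X a * X b) ^ (m - 1) := by
  rcases m with _ | _ | m
  · simp
  · simp [hab]
  · simp [hab, hab.symm]
    ring
end

theorem pderiv_inl_pderiv_inr_P7 (m : ℕ) (i j : Fin 2) :
    pderiv (Sum.inl i) (pderiv (Sum.inr j) (P7 m)) =
      if i = j then C ((m : ℂ) ^ 2) * (X (Sum.inl i) * X (Sum.inr i)) ^ (m - 1) else 0 := by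
  fin_cases i <;> fin_cases j <;>
    simp (disch := decide) only [P7, Fin.zero_eta, Fin.mk_one, map_add, map_zero,
      pderiv_pderiv_X_mul_X_pow, pderiv_X_mul_X_pow_of_ne] <;> simp

theorem one_sub_mul_one_sub_conj_pow_of_norm_eq_one {ζ : ℂ} (hζ : ‖ζ‖ = 1) (n : ℕ) :
    ((1 - ζ) * (1 - conj ζ)) ^ n = (-1) ^ n * ζ ^ n * (1 - conj ζ) ^ (2 * n) := by
  have hconj : ζ * conj ζ = 1 := by
    rw [Complex.mul_conj, Complex.normSq_eq_norm_sq, hζ]; norm_num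
  have h : (1 - ζ) * (1 - conj ζ) = -ζ * (1 - conj ζ) ^ 2 := by
    linear_combination -(1 - conj ζ) * hconj
  rw [h, mul_pow, pow_mul, neg_pow]

theorem Q7_eval (m1 m2 : ℕ) (i j : Fin 2) (ζ : ℂ) :
    (Q7 m1 m2 i j).eval ζ =
      if i = j then (m1 : ℂ) ^ 2 * (-1) ^ (m1 - 1) * ζ ^ (m2 + m1 - 1) else 0 := by
  unfold Q7; split_ifs <;> simp

theorem isUnit_Q7 {m1 : ℕ} (hm1 : m1 ≠ 0) (m2 : ℕ) {ζ : ℂ} (hζ : ζ ≠ 0) :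
    IsUnit (Matrix.of fun i j : Fin 2 => (Q7 m1 m2 i j).eval ζ) := by
  rw [Matrix.isUnit_iff_isUnit_det, Matrix.det_fin_two]
  simp [Q7_eval, hm1, hζ]

theorem stmt7_general (D1 m1 m2 : ℕ) (hD1 : 2 ≤ D1)
    (hm1 : D1 = 2 * m1) :
    ∀ ζ : ℂ, ‖ζ‖ = 1 →
      (∀ i j : Fin 2,
        ζ ^ m2 * ∑ ℓ : Fin 2, ((![(1 : ℝ), 0] ℓ : ℝ) : ℂ) *
            MvPolynomial.eval
              (Sum.elim (fun p => (1 - ζ) * (![1, 1] : Fin 2 → ℂ) p)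
                (fun p => (1 - conj ζ) * conj ((![1, 1] : Fin 2 → ℂ) p)))
              (MvPolynomial.pderiv (Sum.inl i)
                (MvPolynomial.pderiv (Sum.inr j) (![P7 m1, P7 m2] ℓ)))
          = (1 - conj ζ) ^ (D1 - 2) * (Q7 m1 m2 i j).eval ζ) ∧
      IsUnit (Matrix.of fun i j : Fin 2 => (Q7 m1 m2 i j).eval ζ) := by
  obtain ⟨k, rfl⟩ : ∃ k, m1 = k + 1 := ⟨m1 - 1, by omega⟩
  intro ζ hζ
  have hζ0 : ζ ≠ 0 := norm_ne_zero_iff.mp (hζ ▸ one_ne_zero)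
  refine ⟨fun i j => ?_, isUnit_Q7 k.succ_ne_zero m2 hζ0⟩
  have hD : D1 - 2 = 2 * k := by omega
  simp only [Fin.sum_univ_two, Matrix.cons_val_zero, Matrix.cons_val_one,
    pderiv_inl_pderiv_inr_P7, Q7_eval, hD]
  have hV : ∀ p, (![1, 1] : Fin 2 → ℂ) p = 1 := fun p => by fin_cases p <;> rfl
  split_ifs
  · simp only [Complex.ofReal_one, Complex.ofReal_zero, one_mul, zero_mul, add_zero, map_mul,
      map_pow, eval_C, eval_X, Sum.elim_inl, Sum.elim_inr, hV, map_one, mul_one,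
      add_tsub_cancel_right, Nat.add_succ_sub_one, one_sub_mul_one_sub_conj_pow_of_norm_eq_one hζ]
    push_cast
    ring
  · simp

theorem stmt7 (D1 D2 m1 m2 : ℕ) (hD1 : 2 ≤ D1) (hD12 : D1 ≤ D2)
    (hm1 : D1 = 2 * m1) (hm2 : D2 = 2 * m2) :
    ∀ ζ : ℂ, ‖ζ‖ = 1 →
      (∀ i j : Fin 2,
        ζ ^ m2 * ∑ ℓ : Fin 2, ((![(1 : ℝ), 0] ℓ : ℝ) : ℂ) *
            MvPolynomial.eval
              (Sum.elim (fun p => (1 - ζ) * (![1, 1] : Fin 2 → ℂ) p)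
                (fun p => (1 - conj ζ) * conj ((![1, 1] : Fin 2 → ℂ) p)))
              (MvPolynomial.pderiv (Sum.inl i)
                (MvPolynomial.pderiv (Sum.inr j) (![P7 m1, P7 m2] ℓ)))
          = (1 - conj ζ) ^ (D1 - 2) * (Q7 m1 m2 i j).eval ζ) ∧
      IsUnit (Matrix.of fun i j : Fin 2 => (Q7 m1 m2 i j).eval ζ) :=
  stmt7_general D1 m1 m2 hD1 hm1
end
end

section
/- Consider a decoupled model in ℂ⁴ (n = d = 2): P_1(z,w) = Σ_{j=D_1−k_1}^{k_1} α_j z_1^j w_1^{D_1−j} with α_j = conj(α_{D_1−j}), and P_2(z,w) = Σ_{j=D_2−k_2}^{k_2} β_j z_2^j w_2^{D_2−j} with β_j = conj(β_{D_2−j}), where 2 ≤ D_1 < D_2, D_ℓ/2 ≤ k_ℓ ≤ D_ℓ−1, and k_0 = max{k_1,k_2}. Then for every c ∈ ℝ², every V ∈ ℂ²∖{0}, and every 2×2 matrix Q(ζ) of polynomials in ζ satisfying ζ^{k_0} Σ_{ℓ=1}^2 c_ℓ P_{ℓ,z_i w_j}((1−ζ)V, (1−conj ζ)·conj V) = (1−conj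 ζ)^{D_1−2} Q_{ij}(ζ) for all |ζ| = 1, the matrix Q(1) is not invertible. In particular, no such decoupled model with D_1 < D_2 is admissible. -/
open ComplexConjugate

noncomputable section

/-- The decoupled polynomial `Σ_{j=D−k}^{k} γ_j z_i^j w_i^{D−j}` in the variables
`z = X ∘ Sum.inl`, `w = X ∘ Sum.inr` (case `n = 2`), using only the `i`-th pair. -/
def decP (D k : ℕ) (γ : ℕ → ℂ) (i : Fin 2) : MvPolynomial (Fin 2 ⊕ Fin 2) ℂ :=
  ∑ j ∈ Finset.Icc (D - k) k,
    MvPolynomial.C (γ j) * MvPolynomial.X (Sum.inl i) ^ j *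
      MvPolynomial.X (Sum.inr i) ^ (D - j)

/-
The off-diagonal mixed derivatives of the decoupled model vanish, so `Q₀₁ = 0`. The entry
`Q₁₁` only sees `P₂`, whose second derivative at `((1-ζ)V, (1-ζ̄)V̄)` is homogeneous of degree
`D₂ - 2` in `1 - ζ` and `1 - ζ̄`; since `1 - ζ = -ζ (1 - ζ̄)` on the circle, it is
`(1 - ζ̄)^(D₂-2)` times a polynomial in `ζ`. Hence `Q₁₁` is divisible by `(1 - ζ̄)^(D₂-D₁)` on the
circle and vanishes at `1`, so `det Q(1) = 0`.
-/

theorem MvPolynomial.pderiv_pderiv_comm {R σ : Type*} [CommRing R] (i j : σ)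
    (f : MvPolynomial σ R) : pderiv i (pderiv j f) = pderiv j (pderiv i f) := by
  have h : ⁅pderiv i, pderiv j⁆ = (0 : Derivation R (MvPolynomial σ R) (MvPolynomial σ R)) :=
    derivation_ext fun k => by
      classical
      rw [Derivation.commutator_apply]
      simp only [pderiv_X, Pi.single_apply]
      split_ifs <;> simp
  rw [← sub_eq_zero, ← Derivation.commutator_apply, h, Derivation.zero_apply]

namespace Complex

theorem infinite_setOf_norm_eq_one_diff_one : ({ζ : ℂ | ‖ζ‖ = 1} \ {1}).Infinite := by
  have : (Metric.sphere (0 : ℂ) 1).Infinite :=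
    (isPreconnected_sphere (by simp [rank_real_complex]) 0 1).infinite_of_nontrivial
      ⟨1, by simp, -1, by simp, by norm_num⟩
  rw [← Set.ext fun _ => mem_sphere_zero_iff_norm]
  exact this.sdiff (Set.finite_singleton 1)

theorem mul_one_sub_conj_of_norm_eq_one {ζ : ℂ} (hζ : ‖ζ‖ = 1) : ζ * (1 - conj ζ) = ζ - 1 := by
  rw [mul_sub, mul_one, mul_conj', hζ]
  norm_num

theorem one_sub_eq_neg_mul_one_sub_conj {ζ : ℂ} (hζ : ‖ζ‖ = 1) : 1 - ζ = -ζ * (1 - conj ζ) := by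
  rw [neg_mul, mul_one_sub_conj_of_norm_eq_one hζ]
  ring

end Complex

namespace Polynomial

open Complex

theorem eval_one_eq_zero_of_one_sub_conj_pow_dvd {p q : ℂ[X]} {a m : ℕ} (hm : m ≠ 0)
    (h : ∀ ζ : ℂ, ‖ζ‖ = 1 → (1 - conj ζ) ^ a * p.eval ζ = (1 - conj ζ) ^ (a + m) * q.eval ζ) :
    p.eval 1 = 0 := by
  have key : X ^ m * p = (X - 1) ^ m * q := by
    refine eq_of_infinite_eval_eq _ _ (infinite_setOf_norm_eq_one_diff_one.mono ?_)
    rintro ζ ⟨hζ, hζ1 : ζ ≠ 1⟩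
    have hne : (1 - conj ζ) ^ a ≠ 0 :=
      pow_ne_zero _ (sub_ne_zero.mpr fun h => hζ1 (by simpa using congr(conj $h).symm))
    have hp : p.eval ζ = (1 - conj ζ) ^ m * q.eval ζ :=
      mul_left_cancel₀ hne (by rw [h ζ hζ, pow_add, mul_assoc])
    simp only [Set.mem_ofPred_eq, eval_mul, eval_pow, eval_X, eval_sub, eval_one, hp,
      ← mul_one_sub_conj_of_norm_eq_one hζ, mul_pow, mul_assoc]
  simpa [hm] using congr(eval 1 $key)

end Polynomial

namespace Decoupled

open MvPolynomial

variable (D k : ℕ) (γ : ℕ → ℂ) (i : Fin 2)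

theorem pderiv_decP_of_ne {s : Fin 2 ⊕ Fin 2} (hl : Sum.inl i ≠ s) (hr : Sum.inr i ≠ s) :
    pderiv s (decP D k γ i) = 0 := by
  simp [decP, pderiv_X_of_ne hl, pderiv_X_of_ne hr]

theorem pderiv_inl_pderiv_inr_decP_of_ne {m v : Fin 2} (h : m ≠ i ∨ v ≠ i) :
    pderiv (Sum.inl m) (pderiv (Sum.inr v) (decP D k γ i)) = 0 := by
  rcases h with hm | hv
  · rw [pderiv_pderiv_comm, pderiv_decP_of_ne D k γ i (by simpa using hm.symm) (by simp),
      map_zero]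
  · rw [pderiv_decP_of_ne D k γ i (by simp) (by simpa using hv.symm), map_zero]

theorem eval_pderiv_inl_pderiv_inr_decP (x : Fin 2 ⊕ Fin 2 → ℂ) :
    eval x (pderiv (Sum.inl i) (pderiv (Sum.inr i) (decP D k γ i))) =
      ∑ j ∈ Finset.Icc (D - k) k,
        γ j * j * (D - j : ℕ) * x (Sum.inl i) ^ (j - 1) * x (Sum.inr i) ^ (D - j - 1) := by
  simp only [decP, map_sum]
  refine Finset.sum_congr rfl fun j _ => ?_
  simp [pderiv_X_of_ne (show (Sum.inl i : Fin 2 ⊕ Fin 2) ≠ Sum.inr i by simp),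
    pderiv_X_of_ne (show (Sum.inr i : Fin 2 ⊕ Fin 2) ≠ Sum.inl i by simp)]
  ring

/-- The weight `j (D - j)` kills exactly the terms with `j = 0` or `j ≥ D`, for which the
exponents `j - 1` and `D - j - 1` would not add up to `D - 2`. -/
theorem mul_one_sub_pow_mul_one_sub_conj_pow {ζ : ℂ} (hζ : ‖ζ‖ = 1) (j : ℕ) (u w : ℂ) :
    (j : ℂ) * (D - j : ℕ) * ((1 - ζ) * u) ^ (j - 1) * ((1 - conj ζ) * w) ^ (D - j - 1) =
      (1 - conj ζ) ^ (D - 2) * ((j : ℂ) * (D - j : ℕ) * u ^ (j - 1) * w ^ (D - j - 1) *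
        (-ζ) ^ (j - 1)) := by
  rcases Nat.eq_zero_or_pos j with rfl | hj
  · simp
  rcases le_or_gt D j with hjD | hjD
  · simp [Nat.sub_eq_zero_of_le hjD]
  rw [Complex.one_sub_eq_neg_mul_one_sub_conj hζ,
    show D - 2 = (j - 1) + (D - j - 1) by omega, mul_pow, mul_pow, mul_pow, pow_add]
  ring

theorem exists_eval_pderiv_inl_pderiv_inr_decP_eq (V W : Fin 2 → ℂ) :
    ∃ R : Polynomial ℂ, ∀ ζ : ℂ, ‖ζ‖ = 1 →
      eval (Sum.elim (fun p => (1 - ζ) * V p) (fun p => (1 - conj ζ) * W p))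
          (pderiv (Sum.inl i) (pderiv (Sum.inr i) (decP D k γ i))) =
        (1 - conj ζ) ^ (D - 2) * R.eval ζ := by
  refine ⟨∑ j ∈ Finset.Icc (D - k) k, Polynomial.C (γ j * j * (D - j : ℕ) * V i ^ (j - 1) *
    W i ^ (D - j - 1)) * (-Polynomial.X) ^ (j - 1), fun ζ hζ => ?_⟩
  simp only [eval_pderiv_inl_pderiv_inr_decP, Sum.elim_inl, Sum.elim_inr,
    Polynomial.eval_finsetSum, Polynomial.eval_mul, Polynomial.eval_C, Polynomial.eval_pow,
    Polynomial.eval_neg, Polynomial.eval_X, Finset.mul_sum]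
  refine Finset.sum_congr rfl fun j _ => ?_
  linear_combination γ j * mul_one_sub_pow_mul_one_sub_conj_pow D hζ j (V i) (W i)

end Decoupled

open Decoupled in
theorem stmt8_general (D1 D2 k1 k2 : ℕ) (hD1 : 2 ≤ D1) (hD12 : D1 < D2)
    (α β : ℕ → ℂ) :
    ∀ (c : Fin 2 → ℝ) (V : Fin 2 → ℂ), V ≠ 0 →
      ∀ Q : Fin 2 → Fin 2 → Polynomial ℂ,
        (∀ ζ : ℂ, ‖ζ‖ = 1 → ∀ i j : Fin 2,
          ζ ^ (max k1 k2) * ∑ ℓ : Fin 2, (c ℓ : ℂ) *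
              MvPolynomial.eval
                (Sum.elim (fun p => (1 - ζ) * V p)
                  (fun p => (1 - conj ζ) * conj (V p)))
                (MvPolynomial.pderiv (Sum.inl i)
                  (MvPolynomial.pderiv (Sum.inr j)
                    (![decP D1 k1 α 0, decP D2 k2 β 1] ℓ)))
            = (1 - conj ζ) ^ (D1 - 2) * (Q i j).eval ζ) →
        ¬ IsUnit (Matrix.of fun i j : Fin 2 => (Q i j).eval 1) := by
  intro c V _ Q hQ
  have h01 : (Q 0 1).eval 1 = 0 := by
    refine Polynomial.eval_one_eq_zero_of_one_sub_conj_pow_dvd (a := D1 - 2) (q := 0)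
      one_ne_zero fun ζ hζ => ?_
    have h := hQ ζ hζ 0 1
    simp only [Fin.sum_univ_two, Matrix.cons_val_zero, Matrix.cons_val_one,
      pderiv_inl_pderiv_inr_decP_of_ne _ _ _ _ (Or.inr Fin.zero_lt_one.ne'),
      pderiv_inl_pderiv_inr_decP_of_ne _ _ _ _ (Or.inl Fin.zero_lt_one.ne)] at h
    simpa using h.symm
  obtain ⟨R, hR⟩ := exists_eval_pderiv_inl_pderiv_inr_decP_eq D2 k2 β 1 V (fun p => conj (V p))
  have h11 : (Q 1 1).eval 1 = 0 := by
    refine Polynomial.eval_one_eq_zero_of_one_sub_conj_pow_dvd (a := D1 - 2) (m := D2 - D1)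
      (q := Polynomial.C (c 1 : ℂ) * Polynomial.X ^ max k1 k2 * R) (by omega) fun ζ hζ => ?_
    have h := hQ ζ hζ 1 1
    simp only [Fin.sum_univ_two, Matrix.cons_val_zero, Matrix.cons_val_one, hR ζ hζ,
      pderiv_inl_pderiv_inr_decP_of_ne _ _ _ _ (Or.inl Fin.zero_lt_one.ne'), map_zero] at h
    rw [show D1 - 2 + (D2 - D1) = D2 - 2 by omega]
    simp only [Polynomial.eval_mul, Polynomial.eval_C, Polynomial.eval_pow, Polynomial.eval_X]
    linear_combination -h
  rw [Matrix.isUnit_iff_isUnit_det, Matrix.det_fin_two]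
  simp [h01, h11]

theorem stmt8 (D1 D2 k1 k2 : ℕ) (hD1 : 2 ≤ D1) (hD12 : D1 < D2)
    (hk1 : D1 ≤ 2 * k1) (hk1' : k1 ≤ D1 - 1)
    (hk2 : D2 ≤ 2 * k2) (hk2' : k2 ≤ D2 - 1)
    (α β : ℕ → ℂ)
    (hα : ∀ j, D1 - k1 ≤ j → j ≤ k1 → α j = conj (α (D1 - j)))
    (hβ : ∀ j, D2 - k2 ≤ j → j ≤ k2 → β j = conj (β (D2 - j))) :
    ∀ (c : Fin 2 → ℝ) (V : Fin 2 → ℂ), V ≠ 0 →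
      ∀ Q : Fin 2 → Fin 2 → Polynomial ℂ,
        (∀ ζ : ℂ, ‖ζ‖ = 1 → ∀ i j : Fin 2,
          ζ ^ (max k1 k2) * ∑ ℓ : Fin 2, (c ℓ : ℂ) *
              MvPolynomial.eval
                (Sum.elim (fun p => (1 - ζ) * V p)
                  (fun p => (1 - conj ζ) * conj (V p)))
                (MvPolynomial.pderiv (Sum.inl i)
                  (MvPolynomial.pderiv (Sum.inr j)
                    (![decP D1 k1 α 0, decP D2 k2 β 1] ℓ)))
            = (1 - conj ζ) ^ (D1 - 2) * (Q i j).eval ζ) →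
        ¬ IsUnit (Matrix.of fun i j : Fin 2 => (Q i j).eval 1) :=
  stmt8_general D1 D2 k1 k2 hD1 hD12 α β
end
end

section
/- Let m ≥ 0 be an integer and let g: {ζ ∈ ℂ : |ζ| ≤ 1} → ℂ be continuous on the closed unit disc and holomorphic on the open unit disc, such that (conj ζ)^m · g(ζ) ∈ ℝ for every ζ with |ζ| = 1. Then there exist a_0, …, a_{2m} ∈ ℂ with a_{2m−ℓ} = conj(a_ℓ) for all 0 ≤ ℓ ≤ 2m (in particular a_m ∈ ℝ) such that g(ζ) = Σ_{ℓ=0}^{2m} a_ℓ ζ^ℓ for all |ζ| ≤ 1; in particular, g is a polynomial of degree at most 2m and is uniquely determined by the values g(1), g'(1), …, g^{(2m)}(1). -/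
/-!
Let `c_k = (2πi)⁻¹ ∮_{|z|=1} z^{-k-1} g(z)` be the Fourier coefficients of `g` on the unit circle.
Cauchy's theorem kills `c_k` for `k < 0`, and for `n ≥ 0` they are the Taylor coefficients of `g`
at `0`. On the circle `conj z = z⁻¹`, so the reality of `conj z ^ m * g z` reads
`conj (g z) = z^{-2m} g z`, which gives `conj c_k = c_{2m-k}`. Hence `c_n = 0` for `n > 2m`,
`g` is the polynomial `∑_{n ≤ 2m} c_n z^n` on the open disc and, by continuity, on the closed one.
A polynomial of degree `≤ 2m` whose first `2m + 1` derivatives vanish at `1` has a root of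
multiplicity `> 2m` there, so it is zero; this is the uniqueness.
-/

open ComplexConjugate

noncomputable section

open Polynomial in
theorem Polynomial.eq_of_iterate_derivative_eval_eq {R : Type*} [CommRing R] [IsDomain R]
    [CharZero R] {p q : R[X]} {N : ℕ} {t : R} (hp : p.natDegree ≤ N) (hq : q.natDegree ≤ N)
    (h : ∀ j ≤ N, (derivative^[j] p).eval t = (derivative^[j] q).eval t) : p = q := by
  classical
  by_contra hne
  have hlt : N < (p - q).rootMultiplicity t :=
    lt_rootMultiplicity_of_isRoot_iterate_derivative (sub_ne_zero.mpr hne) fun j hj => by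
      simp [IsRoot, h j hj]
  have hle : (p - q).rootMultiplicity t ≤ N := calc
    _ = (p - q).roots.count t := (count_roots _).symm
    _ ≤ Multiset.card (p - q).roots := Multiset.count_le_card _ _
    _ ≤ (p - q).natDegree := card_roots' _
    _ ≤ N := (natDegree_sub_le _ _).trans (max_le hp hq)
  omega

open Polynomial in
theorem Polynomial.exists_coeff_eq_of_eq_zero_of_lt {R : Type*} [Semiring R] {c : ℕ → R}
    {N : ℕ} (hc : ∀ n, N < n → c n = 0) : ∃ p : R[X], p.natDegree ≤ N ∧ ∀ n, p.coeff n = c n := by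
  classical
  have hcoeff : ∀ n, (∑ i ∈ Finset.range (N + 1), monomial i (c i)).coeff n = c n := by
    intro n
    simp only [finsetSum_coeff, coeff_monomial, Finset.sum_ite_eq', Finset.mem_range]
    split_ifs with hn
    · rfl
    · exact (hc n (by omega)).symm
  exact ⟨_, natDegree_le_iff_coeff_eq_zero.2 fun n hn => (hcoeff n).trans (hc n hn), hcoeff⟩

namespace Complex

open Metric

/-- The `k`-th Fourier coefficient of `θ ↦ g (exp (θ * I))`, written as a circle integral. -/
def unitCircleCoeff (g : ℂ → ℂ) (k : ℤ) : ℂ :=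
  (2 * Real.pi * I)⁻¹ * ∮ z in C(0, 1), z ^ (-(k + 1)) * g z

theorem unitCircleCoeff_eq_zero_of_neg {g : ℂ → ℂ} (hcont : ContinuousOn g (closedBall 0 1))
    (hdiff : DifferentiableOn ℂ g (ball 0 1)) {k : ℤ} (hk : k < 0) :
    unitCircleCoeff g k = 0 := by
  obtain ⟨n, rfl⟩ := Int.eq_negSucc_of_lt_zero hk
  have hint : (∮ z in C(0, 1), z ^ n * g z) = 0 :=
    DiffContOnCl.circleIntegral_eq_zero zero_le_one
      ⟨(differentiable_pow n).differentiableOn.mul hdiff,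
        (continuous_pow n).continuousOn.mul (by rwa [closure_ball 0 one_ne_zero])⟩
  simp [unitCircleCoeff, Int.negSucc_eq, hint]

theorem conj_circleIntegral_unit (f : ℂ → ℂ) :
    conj (∮ z in C(0, 1), f z) = -∮ z in C(0, 1), (z ^ 2)⁻¹ * conj (f z) := by
  simp only [circleIntegral, ← intervalIntegral.intervalIntegral_conj,
    ← intervalIntegral.integral_neg]
  refine intervalIntegral.integral_congr fun θ _ => ?_
  have hnorm : ‖circleMap 0 1 θ‖ = 1 := by simp
  have hne : circleMap 0 1 θ ≠ 0 := circleMap_ne_center one_ne_zero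
  simp only [deriv_circleMap, smul_eq_mul, map_mul, conj_I, ← inv_eq_conj hnorm]
  field_simp

theorem conj_eq_inv_pow_mul_of_im_conj_pow_mul_eq_zero {z w : ℂ} (hz : ‖z‖ = 1) {m : ℕ}
    (h : (conj z ^ m * w).im = 0) : conj w = (z ^ (2 * m))⁻¹ * w := by
  have hne : z ≠ 0 := norm_ne_zero_iff.mp (hz ▸ one_ne_zero)
  have hfix := conj_eq_iff_im.mpr h
  rw [map_mul, map_pow, conj_conj, ← inv_eq_conj hz, inv_pow] at hfix
  rw [pow_mul', sq, mul_inv, mul_assoc, ← hfix, ← mul_assoc, inv_mul_cancel₀ (pow_ne_zero m hne),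
    one_mul]

theorem conj_unitCircleCoeff {g : ℂ → ℂ} {m : ℕ}
    (hreal : ∀ z : ℂ, ‖z‖ = 1 → (conj z ^ m * g z).im = 0) (k : ℤ) :
    conj (unitCircleCoeff g k) = unitCircleCoeff g (2 * m - k) := by
  have hsphere : Set.EqOn (fun z => (z ^ 2)⁻¹ * conj (z ^ (-(k + 1)) * g z))
      (fun z => z ^ (-(2 * m - k + 1)) * g z) (sphere 0 1) := fun z hz => by
    have hz : ‖z‖ = 1 := by simpa using hz
    have hne : z ≠ 0 := norm_ne_zero_iff.mp (hz ▸ one_ne_zero)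
    simp only [map_mul, map_zpow₀, ← inv_eq_conj hz,
      conj_eq_inv_pow_mul_of_im_conj_pow_mul_eq_zero hz (hreal z hz)]
    simp only [← zpow_natCast, ← zpow_neg, inv_zpow', ← mul_assoc, ← zpow_add₀ hne]
    congr 2
    push_cast
    ring
  have hconst : conj (2 * Real.pi * I)⁻¹ = -(2 * Real.pi * I)⁻¹ := by
    simp [conj_ofReal, map_ofNat]
  rw [unitCircleCoeff, unitCircleCoeff, map_mul, conj_circleIntegral_unit,
    circleIntegral.integral_congr zero_le_one hsphere, hconst, neg_mul_neg]

theorem cauchyPowerSeries_unit_apply (g : ℂ → ℂ) (n : ℕ) (w : ℂ) :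
    (cauchyPowerSeries g 0 1 n fun _ => w) = unitCircleCoeff g n * w ^ n := by
  have hpt (z : ℂ) : (w / z) ^ n * (z⁻¹ * g z) = w ^ n * (z ^ (-((n : ℤ) + 1)) * g z) := by
    rw [zpow_neg, ← Nat.cast_succ, zpow_natCast, div_eq_mul_inv, mul_pow, ← inv_pow, pow_succ]
    ring
  simp only [cauchyPowerSeries_apply, sub_zero, smul_eq_mul, hpt, circleIntegral.integral_const_mul,
    unitCircleCoeff]
  ring

theorem unitCircleCoeff_eq_zero_of_lt {g : ℂ → ℂ} {m : ℕ}
    (hcont : ContinuousOn g (closedBall 0 1)) (hdiff : DifferentiableOn ℂ g (ball 0 1))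
    (hreal : ∀ z : ℂ, ‖z‖ = 1 → (conj z ^ m * g z).im = 0) {n : ℤ} (hn : 2 * m < n) :
    unitCircleCoeff g n = 0 := by
  rw [← map_eq_zero (starRingEnd ℂ), conj_unitCircleCoeff hreal]
  exact unitCircleCoeff_eq_zero_of_neg hcont hdiff (by omega)

open Polynomial in
theorem eqOn_closedBall_eval_of_coeff_eq_unitCircleCoeff {g : ℂ → ℂ}
    (hcont : ContinuousOn g (closedBall 0 1)) (hdiff : DifferentiableOn ℂ g (ball 0 1))
    {p : ℂ[X]} (hp : ∀ n : ℕ, p.coeff n = unitCircleCoeff g n) :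
    Set.EqOn g (fun ζ => p.eval ζ) (closedBall 0 1) := by
  have hclosure : closure (ball (0 : ℂ) 1) = closedBall 0 1 := closure_ball 0 one_ne_zero
  have hps : HasFPowerSeriesOnBall g (cauchyPowerSeries g 0 (1 : NNReal)) 0 1 :=
    DiffContOnCl.hasFPowerSeriesOnBall ⟨by simpa using hdiff, by simpa [hclosure] using hcont⟩
      one_pos
  have hball : Set.EqOn g (fun ζ => p.eval ζ) (ball 0 1) := fun ζ hζ => by
    have hsum := hps.hasSum (by simpa [← ENNReal.coe_one, Metric.eball_coe] using hζ)
    simp only [zero_add, NNReal.coe_one, cauchyPowerSeries_unit_apply, ← hp] at hsum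
    change g ζ = p.eval ζ
    rw [eval_eq_sum_range]
    exact hsum.unique (hasSum_sum_of_ne_finset_zero fun n hn => by
      rw [coeff_eq_zero_of_natDegree_lt (by simpa [Nat.lt_succ_iff] using hn), zero_mul])
  exact hball.of_subset_closure hcont p.continuous.continuousOn ball_subset_closedBall hclosure.ge

end Complex

theorem stmt11 (m : ℕ) (g : ℂ → ℂ)
    (hcont : ContinuousOn g (Metric.closedBall 0 1))
    (hdiff : DifferentiableOn ℂ g (Metric.ball 0 1))
    (hreal : ∀ ζ : ℂ, ‖ζ‖ = 1 → ((conj ζ) ^ m * g ζ).im = 0) :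
    ∃ p : Polynomial ℂ,
      p.natDegree ≤ 2 * m ∧
      (∀ ℓ ≤ 2 * m, p.coeff (2 * m - ℓ) = conj (p.coeff ℓ)) ∧
      (p.coeff m).im = 0 ∧
      (∀ ζ ∈ Metric.closedBall (0 : ℂ) 1, g ζ = p.eval ζ) ∧
      (∀ q : Polynomial ℂ, q.natDegree ≤ 2 * m →
        (∀ j ≤ 2 * m,
          ((fun r : Polynomial ℂ => Polynomial.derivative r)^[j] q).eval 1 =
            ((fun r : Polynomial ℂ => Polynomial.derivative r)^[j] p).eval 1) →
        q = p) := by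
  obtain ⟨p, hdeg, hcoeff⟩ := Polynomial.exists_coeff_eq_of_eq_zero_of_lt
    (c := fun n : ℕ => Complex.unitCircleCoeff g n)
    fun n hn => Complex.unitCircleCoeff_eq_zero_of_lt hcont hdiff hreal (by exact_mod_cast hn)
  have hsymm : ∀ ℓ ≤ 2 * m, p.coeff (2 * m - ℓ) = conj (p.coeff ℓ) := fun ℓ hℓ => by
    rw [hcoeff, hcoeff, Complex.conj_unitCircleCoeff hreal, Nat.cast_sub hℓ, Nat.cast_mul,
      Nat.cast_two]
  refine ⟨p, hdeg, hsymm, ?_,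
    Complex.eqOn_closedBall_eval_of_coeff_eq_unitCircleCoeff hcont hdiff hcoeff,
    fun q hq hder => Polynomial.eq_of_iterate_derivative_eval_eq hq hdeg hder⟩
  have hmid := hsymm m (by omega)
  rw [Nat.two_mul, Nat.add_sub_cancel] at hmid
  exact Complex.conj_eq_iff_im.mp hmid.symm
end
end

section
/- Let m ∈ ℤ, let λ ∈ ℂ with |λ| = 1, and let f: {ζ ∈ ℂ : |ζ| ≤ 1} → ℂ be continuous on the closed unit disc and holomorphic on the open unit disc, such that f(ζ) = λ · ζ^m · conj(f(ζ)) for every ζ with |ζ| = 1. If m < 0, then f is identically zero. If m ≥ 0, then f is a polynomial of degree at most m, f(ζ) = Σ_{ℓ=0}^{m} a_ℓ ζ^ℓ, whose coefficients satisfy a_ℓ = λ · conj(a_{m−ℓ}) for all 0 ≤ ℓ ≤ m; in particular, if f(1) = f'(1) = ⋯ = f^{(m)}(1) = 0 then f is identically zero. -/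
/-!
On the unit circle the reflection condition becomes the symmetry `c n = l * conj (c (m - n))` of
the Fourier coefficients of `f`. By Cauchy's theorem `c n = 0` for `n < 0`, hence also for
`n > m`; since the `c n` with `n ≥ 0` are the Taylor coefficients of `f` at `0`, `f` is a
polynomial of degree at most `m` (zero if `m < 0`). A polynomial of degree at most `m` whose
derivatives of order `≤ m` all vanish at `1` has a root of multiplicity `> m` there, so it is zero.
-/

open ComplexConjugate

noncomputable section

open Complex Metric Polynomial Real Set

theorem intervalIntegral.integral_conj {𝕜 : Type*} [RCLike 𝕜] {f : ℝ → 𝕜} {a b : ℝ}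
    {μ : MeasureTheory.Measure ℝ} :
    ∫ x in a..b, conj (f x) ∂μ = conj (∫ x in a..b, f x ∂μ) := by
  simp [intervalIntegral, _root_.integral_conj]

theorem Polynomial.hasSum_coeff_mul_pow {R : Type*} [CommSemiring R] [TopologicalSpace R]
    (p : R[X]) (x : R) : HasSum (fun n => p.coeff n * x ^ n) (p.eval x) := by
  rw [eval_eq_sum_range]
  exact hasSum_sum_of_ne_finset_zero fun n hn => by
    rw [coeff_eq_zero_of_natDegree_lt (by simpa using hn), zero_mul]

theorem Polynomial.eq_zero_of_natDegree_le_of_isRoot_iterate_derivative {R : Type*} [CommRing R]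
    [IsDomain R] [CharZero R] {p : R[X]} {t : R} {n : ℕ} (hdeg : p.natDegree ≤ n)
    (hroot : ∀ m ≤ n, (derivative^[m] p).IsRoot t) : p = 0 := by
  classical
  by_contra hp
  have hlt := lt_rootMultiplicity_of_isRoot_iterate_derivative hp hroot
  have hle : p.rootMultiplicity t ≤ p.natDegree :=
    count_roots p ▸ (Multiset.count_le_card _ _).trans (card_roots' p)
  omega

def circleCoeff (f : ℂ → ℂ) (n : ℤ) : ℂ :=
  (2 * π : ℂ)⁻¹ * ∫ θ in (0 : ℝ)..2 * π, circleMap 0 1 θ ^ (-n) * f (circleMap 0 1 θ)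

theorem circleCoeff_eq_mul_conj {m : ℤ} {l : ℂ} {f : ℂ → ℂ}
    (hrefl : ∀ ζ : ℂ, ‖ζ‖ = 1 → f ζ = l * ζ ^ m * conj (f ζ)) (n : ℤ) :
    circleCoeff f n = l * conj (circleCoeff f (m - n)) := by
  have integrand (θ : ℝ) : circleMap 0 1 θ ^ (-n) * f (circleMap 0 1 θ) =
      l * conj (circleMap 0 1 θ ^ (-(m - n)) * f (circleMap 0 1 θ)) := by
    set z := circleMap 0 1 θ
    have hz : ‖z‖ = 1 := by simp [z, norm_circleMap_zero]
    have hz0 : z ≠ 0 := circleMap_ne_center one_ne_zero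
    rw [map_mul, map_zpow₀, ← inv_eq_conj hz, inv_zpow', neg_neg, zpow_sub₀ hz0, zpow_neg]
    conv_lhs => rw [hrefl z hz]
    ring
  simp only [circleCoeff, intervalIntegral.integral_congr fun θ _ => integrand θ,
    intervalIntegral.integral_const_mul, intervalIntegral.integral_conj]
  simp only [map_mul, map_inv₀, map_ofNat, conj_ofReal]
  ring

theorem circleIntegral_zpow_smul_eq_circleCoeff (f : ℂ → ℂ) (n : ℤ) :
    (∮ z in C(0, 1), z ^ (-n - 1) • f z) = 2 * π * I * circleCoeff f n := by
  have integrand (θ : ℝ) : deriv (circleMap 0 1) θ • circleMap 0 1 θ ^ (-n - 1) •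
      f (circleMap 0 1 θ) = I * (circleMap 0 1 θ ^ (-n) * f (circleMap 0 1 θ)) := by
    have hz0 : circleMap 0 1 θ ≠ 0 := circleMap_ne_center one_ne_zero
    rw [deriv_circleMap, zpow_sub₀ hz0, zpow_one, smul_eq_mul, smul_eq_mul]
    field_simp
  have hπ : (π : ℂ) ≠ 0 := ofReal_ne_zero.mpr pi_ne_zero
  rw [circleIntegral, intervalIntegral.integral_congr fun θ _ => integrand θ,
    intervalIntegral.integral_const_mul, circleCoeff]
  field_simp

theorem circleCoeff_eq_zero_of_neg {f : ℂ → ℂ} (hf : DiffContOnCl ℂ f (ball 0 1)) {n : ℤ}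
    (hn : n < 0) : circleCoeff f n = 0 := by
  obtain ⟨k, hk⟩ : ∃ k : ℕ, -n - 1 = k := ⟨(-n - 1).toNat, by omega⟩
  have hcauchy : (∮ z in C(0, 1), z ^ (-n - 1) • f z) = 0 := by
    simp only [hk, zpow_natCast]
    exact ((differentiable_pow k).diffContOnCl.smul hf).circleIntegral_eq_zero zero_le_one
  rw [circleIntegral_zpow_smul_eq_circleCoeff] at hcauchy
  simpa [pi_ne_zero, I_ne_zero] using hcauchy

theorem cauchyPowerSeries_apply_eq_circleCoeff_mul_pow (f : ℂ → ℂ) (n : ℕ) (ζ : ℂ) :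
    (cauchyPowerSeries f 0 1 n fun _ => ζ) = circleCoeff f n * ζ ^ n := by
  have integrand : EqOn (fun z => (ζ / (z - 0)) ^ n • (z - 0)⁻¹ • f z)
      (fun z => ζ ^ n * (z ^ (-(n : ℤ) - 1) • f z)) (sphere 0 1) := by
    intro z hz
    have hz0 : z ≠ 0 := ne_of_mem_sphere hz one_ne_zero
    simp only [sub_zero, smul_eq_mul, div_pow, zpow_sub₀ hz0, zpow_neg, zpow_natCast, zpow_one]
    field_simp
  rw [cauchyPowerSeries_apply, circleIntegral.integral_congr zero_le_one integrand,
    circleIntegral.integral_const_mul, circleIntegral_zpow_smul_eq_circleCoeff, smul_eq_mul]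
  have hπ : (π : ℂ) ≠ 0 := ofReal_ne_zero.mpr pi_ne_zero
  field_simp

theorem hasSum_circleCoeff_mul_pow {f : ℂ → ℂ} (hf : DiffContOnCl ℂ f (ball 0 1)) {ζ : ℂ}
    (hζ : ζ ∈ ball 0 1) : HasSum (fun n : ℕ => circleCoeff f n * ζ ^ n) (f ζ) := by
  have hps := hf.hasFPowerSeriesOnBall (R := 1) one_pos
  have hζ' : ζ ∈ Metric.eball (0 : ℂ) (1 : NNReal) := by rwa [Metric.eball_coe, NNReal.coe_one]
  have hsum := hps.hasSum hζ'
  rw [zero_add, NNReal.coe_one] at hsum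
  simpa only [cauchyPowerSeries_apply_eq_circleCoeff_mul_pow] using hsum

theorem eqOn_closedBall_eval_of_circleCoeff_eq_coeff {f : ℂ → ℂ}
    (hf : DiffContOnCl ℂ f (ball 0 1)) {p : ℂ[X]} (hp : ∀ n : ℕ, circleCoeff f n = p.coeff n) :
    EqOn f p.eval (closedBall 0 1) := by
  have hball : EqOn f p.eval (ball 0 1) := fun ζ hζ =>
    (hasSum_circleCoeff_mul_pow hf hζ).unique (by simpa [hp] using p.hasSum_coeff_mul_pow ζ)
  rw [← closure_ball (0 : ℂ) one_ne_zero]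
  exact hball.of_subset_closure hf.continuousOn p.continuous.continuousOn subset_closure le_rfl

theorem stmt12_general (m : ℤ) (l : ℂ) (f : ℂ → ℂ)
    (hcont : ContinuousOn f (Metric.closedBall 0 1))
    (hdiff : DifferentiableOn ℂ f (Metric.ball 0 1))
    (hrefl : ∀ ζ : ℂ, ‖ζ‖ = 1 → f ζ = l * ζ ^ m * conj (f ζ)) :
    (m < 0 → ∀ ζ ∈ Metric.closedBall (0 : ℂ) 1, f ζ = 0) ∧
    (0 ≤ m → ∃ p : Polynomial ℂ,
      p.natDegree ≤ m.toNat ∧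
      (∀ ℓ ≤ m.toNat, p.coeff ℓ = l * conj (p.coeff (m.toNat - ℓ))) ∧
      (∀ ζ ∈ Metric.closedBall (0 : ℂ) 1, f ζ = p.eval ζ) ∧
      ((∀ j ≤ m.toNat,
          ((fun r : Polynomial ℂ => Polynomial.derivative r)^[j] p).eval 1 = 0) →
        ∀ ζ ∈ Metric.closedBall (0 : ℂ) 1, f ζ = 0)) := by
  have hf : DiffContOnCl ℂ f (ball 0 1) := ⟨hdiff, by rwa [closure_ball _ one_ne_zero]⟩
  have hvanish (n : ℕ) (hn : m < n) : circleCoeff f n = 0 := by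
    rw [circleCoeff_eq_mul_conj hrefl, circleCoeff_eq_zero_of_neg hf (by omega), map_zero,
      mul_zero]
  refine ⟨fun hm ζ hζ => ?_, fun hm => ?_⟩
  · have hzero := eqOn_closedBall_eval_of_circleCoeff_eq_coeff hf (p := 0) fun n => by
      rw [coeff_zero, hvanish n (by omega)]
    simpa using hzero hζ
  set N := m.toNat
  set p : ℂ[X] := ∑ k ∈ Finset.range (N + 1), monomial k (circleCoeff f k)
  have hcoeff (n : ℕ) : p.coeff n = circleCoeff f n := by
    simp only [p, finsetSum_coeff, coeff_monomial, Finset.sum_ite_eq', Finset.mem_range]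
    split_ifs with hn
    · rfl
    · exact (hvanish n (by omega)).symm
  have hdeg : p.natDegree ≤ N := natDegree_le_iff_coeff_eq_zero.mpr fun n hn => by
    rw [hcoeff, hvanish n (by omega)]
  have heval := eqOn_closedBall_eval_of_circleCoeff_eq_coeff hf fun n => (hcoeff n).symm
  refine ⟨p, hdeg, fun ℓ hℓ => ?_, heval, fun hjet ζ hζ => ?_⟩
  · rw [hcoeff, hcoeff, circleCoeff_eq_mul_conj hrefl, Nat.cast_sub hℓ, Int.toNat_of_nonneg hm]
  · rw [heval hζ, eq_zero_of_natDegree_le_of_isRoot_iterate_derivative hdeg hjet]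
    exact eval_zero

theorem stmt12 (m : ℤ) (l : ℂ) (hl : ‖l‖ = 1) (f : ℂ → ℂ)
    (hcont : ContinuousOn f (Metric.closedBall 0 1))
    (hdiff : DifferentiableOn ℂ f (Metric.ball 0 1))
    (hrefl : ∀ ζ : ℂ, ‖ζ‖ = 1 → f ζ = l * ζ ^ m * conj (f ζ)) :
    (m < 0 → ∀ ζ ∈ Metric.closedBall (0 : ℂ) 1, f ζ = 0) ∧
    (0 ≤ m → ∃ p : Polynomial ℂ,
      p.natDegree ≤ m.toNat ∧
      (∀ ℓ ≤ m.toNat, p.coeff ℓ = l * conj (p.coeff (m.toNat - ℓ))) ∧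
      (∀ ζ ∈ Metric.closedBall (0 : ℂ) 1, f ζ = p.eval ζ) ∧
      ((∀ j ≤ m.toNat,
          ((fun r : Polynomial ℂ => Polynomial.derivative r)^[j] p).eval 1 = 0) →
        ∀ ζ ∈ Metric.closedBall (0 : ℂ) 1, f ζ = 0)) :=
  stmt12_general m l f hcont hdiff hrefl
end
end
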